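/- There exists a nonzero real symmetric 7×7 matrix M (indexed 0,1,…,6) with M_{00} = 0, M_{0i} = M_{ii} for all i ∈ {1,…,6}, M_{ij} = 0 whenever {i,j} is an edge of G₆, and M·Z* = 0. An explicit witness is: M_{04} = M_{44} = −(1+√5)/2, M_{06} = M_{66} = (1+√5)/2, M_{34} = −1, M_{36} = 1, M_{45} = −1, M_{56} = 1, and all other independent entries equal to 0. Hence Z* is dual degenerate, i.e. the nondegeneracy system associated with Z* admits a nontrivial solution. -/

import Mathlib

/-- Adjacency in the graph `G₆` on the vertex set `{1, …, 6}` with edge set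
`{ {1,3}, {1,4}, {1,6}, {2,4}, {2,5}, {2,6}, {3,5}, {4,6} }`. -/
def g6Adj (i j : ℕ) : Prop :=
  (i, j) ∈ [(1, 3), (1, 4), (1, 6), (2, 4), (2, 5), (2, 6), (3, 5), (4, 6)] ∨
    (j, i) ∈ [(1, 3), (1, 4), (1, 6), (2, 4), (2, 5), (2, 6), (3, 5), (4, 6)]

/-- The explicit dual optimal solution `Z*` of the Lovász theta SDP of `G₆`, with
`c = (√5 - 1)/2`. -/
noncomputable def g6Zstar : Matrix (Fin 7) (Fin 7) ℝ :=
  let c : ℝ := (Real.sqrt 5 - 1) / 2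
  !![Real.sqrt 5, -1, -1, -1, -1, -1, -1;
     -1, 1, 0, c, c, 0, c;
     -1, 0, 1, 0, c, c, c;
     -1, c, 0, 1, 0, c, 0;
     -1, c, c, 0, 1, 0, 1;
     -1, 0, c, c, 0, 1, 0;
     -1, c, c, 0, 1, 0, 1]

/-- The explicit witness of dual degeneracy of `Z*`: with `g = (1 + √5)/2`, the symmetric
matrix with `M 0 4 = M 4 4 = -g`, `M 0 6 = M 6 6 = g`, `M 3 4 = -1`, `M 3 6 = 1`,
`M 4 5 = -1`, `M 5 6 = 1`, and all other independent entries `0`. -/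
noncomputable def g6M : Matrix (Fin 7) (Fin 7) ℝ :=
  let g : ℝ := (1 + Real.sqrt 5) / 2
  !![0, 0, 0, 0, -g, 0, g;
     0, 0, 0, 0, 0, 0, 0;
     0, 0, 0, 0, 0, 0, 0;
     0, 0, 0, 0, -1, 0, 1;
     -g, 0, 0, -1, -g, -1, 0;
     0, 0, 0, 0, -1, 0, 1;
     g, 0, 0, 1, 0, 1, g]

/-! `Z*` has two kernel vectors, `v = e₆ - e₄` (rows 4 and 6 of `Z*` coincide) and
`w = φ e₀ + e₃ + (φ/2)(e₄ + e₆) + e₅` with `φ = (1 + √5)/2` (every row of `Z* w` vanishes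
because `φ c = 1`). The witness is the symmetrised outer product `M = v wᵀ + w vᵀ`, so it is
symmetric and `M Z* = v (wᵀ Z*) + w (vᵀ Z*) = 0`. The remaining conditions are read off the
entries of `M`. -/

open Matrix

theorem Matrix.vecMulVec_add_vecMulVec_mul_eq_zero {l m n α : Type*} [Fintype m]
    [NonUnitalSemiring α] {v w : m → α} {A : Matrix m n α}
    (hv : v ᵥ* A = 0) (hw : w ᵥ* A = 0) (x y : l → α) :
    (vecMulVec x v + vecMulVec y w) * A = 0 := by
  rw [Matrix.add_mul, vecMulVec_mul, vecMulVec_mul, hv, hw]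
  ext
  simp [vecMulVec_apply]

theorem Matrix.isSymm_vecMulVec_add_vecMulVec {n α : Type*} [AddCommMagma α] [CommMagma α]
    (v w : n → α) : (vecMulVec v w + vecMulVec w v).IsSymm := by
  rw [IsSymm, transpose_add, transpose_vecMulVec, transpose_vecMulVec, add_comm]

noncomputable def g6KerVec₁ : Fin 7 → ℝ := ![0, 0, 0, 0, -1, 0, 1]

noncomputable def g6KerVec₂ : Fin 7 → ℝ :=
  ![Real.goldenRatio, 0, 0, 1, Real.goldenRatio / 2, 1, Real.goldenRatio / 2]

theorem g6KerVec₁_vecMul_g6Zstar : g6KerVec₁ ᵥ* g6Zstar = 0 := by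
  ext j
  fin_cases j <;> simp [g6KerVec₁, g6Zstar, vecMul, dotProduct, Fin.sum_univ_seven]

theorem g6KerVec₂_vecMul_g6Zstar : g6KerVec₂ ᵥ* g6Zstar = 0 := by
  ext j
  fin_cases j <;>
    simp only [g6KerVec₂, g6Zstar, vecMul, dotProduct, Fin.sum_univ_seven, of_apply, cons_val',
      cons_val, cons_val_zero, cons_val_one, cons_val_fin_one, Fin.reduceFinMk, Fin.mk_one,
      Fin.zero_eta, Fin.isValue, Pi.zero_apply] <;>
    ring_nf <;> norm_num

theorem g6M_eq_vecMulVec :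
    g6M = vecMulVec g6KerVec₁ g6KerVec₂ + vecMulVec g6KerVec₂ g6KerVec₁ := by
  ext i j
  fin_cases i <;> fin_cases j <;>
    simp only [g6M, g6KerVec₁, g6KerVec₂, Matrix.add_apply, vecMulVec_apply, of_apply, cons_val',
      cons_val, cons_val_zero, cons_val_one, cons_val_fin_one, Fin.reduceFinMk, Fin.mk_one,
      Fin.zero_eta, Fin.isValue] <;>
    ring

theorem g6M_ne_zero : g6M ≠ 0 := fun h ↦ by
  simpa [g6M] using congrFun (congrFun h 3) 6

theorem g6M_zero_apply_eq_apply_self (i : Fin 7) (hi : i.val ≠ 0) : g6M 0 i = g6M i i := by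
  fin_cases i <;> simp_all [g6M]

theorem g6M_apply_eq_zero_of_g6Adj (i j : Fin 7) (hadj : g6Adj i.val j.val) : g6M i j = 0 := by
  fin_cases i <;> fin_cases j <;> simp_all [g6M, g6Adj]

/-- There is a nonzero real symmetric `7 × 7` matrix `M` with `M 0 0 = 0`, `M 0 i = M i i`
for `i ∈ {1, …, 6}`, `M i j = 0` on edges of `G₆`, and `M · Z* = 0` — namely the explicit
witness `g6M`.  Hence `Z*` is dual degenerate: the nondegeneracy system associated with `Z*`
admits a nontrivial solution. -/
theorem g6Zstar_dual_degenerate :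
    (g6M ≠ 0 ∧ g6M.IsSymm ∧ g6M 0 0 = 0 ∧
      (∀ i : Fin 7, i.val ≠ 0 → g6M 0 i = g6M i i) ∧
      (∀ i j : Fin 7, i.val ≠ 0 → j.val ≠ 0 → g6Adj i.val j.val → g6M i j = 0) ∧
      g6M * g6Zstar = 0) ∧
    ∃ M : Matrix (Fin 7) (Fin 7) ℝ, M ≠ 0 ∧ M.IsSymm ∧ M 0 0 = 0 ∧
      (∀ i : Fin 7, i.val ≠ 0 → M 0 i = M i i) ∧
      (∀ i j : Fin 7, i.val ≠ 0 → j.val ≠ 0 → g6Adj i.val j.val → M i j = 0) ∧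
      M * g6Zstar = 0 := by
  have hsymm : g6M.IsSymm := g6M_eq_vecMulVec ▸ isSymm_vecMulVec_add_vecMulVec _ _
  have hker : g6M * g6Zstar = 0 := g6M_eq_vecMulVec ▸
    vecMulVec_add_vecMulVec_mul_eq_zero g6KerVec₂_vecMul_g6Zstar g6KerVec₁_vecMul_g6Zstar _ _
  refine (fun hM ↦ ⟨hM, g6M, hM⟩) ⟨g6M_ne_zero, hsymm, by simp [g6M],
    g6M_zero_apply_eq_apply_self, fun i j _ _ ↦ g6M_apply_eq_zero_of_g6Adj i j, hker⟩
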